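/- Let h : ℝ → ℝ be continuously differentiable with h(0) = 0 and h'(1) = 0. Then ∫₀¹ h'(t)² dt ≥ (π/2)² · ∫₀¹ h(t)² dt. -/

import Mathlib

open Real intervalIntegral

/-!
For `F t = c h(t)² cot(ct)` one has the Picone-type identity
`F' = h'² - c²h² - (h' - c h cot(ct))²` wherever `sin(ct) ≠ 0`. When `cL ≤ π/2`, `sin(ct) > 0` on
`(0, L]` and `F L ≥ 0`, so integrating over `[ε, L]` gives `∫_ε^L (h'² - c²h²) ≥ -F ε`; and
`F ε → 0` as `ε → 0⁺`, because `h(0) = 0` makes `h(ε)² cot(cε) = O(ε)`.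
-/

open Filter Topology

theorem HasDerivAt.tendsto_div_self_nhdsGT_zero {f : ℝ → ℝ} {f' : ℝ} (hf : HasDerivAt f f' 0)
    (hf0 : f 0 = 0) : Tendsto (fun s => f s / s) (𝓝[>] 0) (𝓝 f') := by
  simpa [hf0, div_eq_inv_mul] using hf.tendsto_slope_zero_right

section Wirtinger

variable {h : ℝ → ℝ} {c L : ℝ}

theorem hasDerivAt_mul_sq_mul_cot {h' t : ℝ} (hh : HasDerivAt h h' t) (hs : sin (c * t) ≠ 0) :
    HasDerivAt (fun s => c * h s ^ 2 * cot (c * s))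
      (h' ^ 2 - c ^ 2 * h t ^ 2 - (h' - c * h t * cot (c * t)) ^ 2) t := by
  have hlin : HasDerivAt (fun s => c * s) c t := by simpa using (hasDerivAt_id t).const_mul c
  have hcot : HasDerivAt (fun s => cot (c * s)) (-c / sin (c * t) ^ 2) t := by
    simp only [cot_eq_cos_div_sin]
    refine (hlin.cos.div hlin.sin hs).congr_deriv ?_
    field_simp
    linear_combination (-c) * sin_sq_add_cos_sq (c * t)
  refine (((hh.pow 2).const_mul c).mul hcot).congr_deriv ?_
  rw [Pi.pow_apply, cot_eq_cos_div_sin]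
  field_simp
  linear_combination c ^ 2 * h t ^ 2 * sin_sq_add_cos_sq (c * t)

theorem tendsto_mul_sq_mul_cot_nhdsGT_zero {h' : ℝ} (hh : HasDerivAt h h' 0) (h0 : h 0 = 0)
    (hc : c ≠ 0) : Tendsto (fun s => c * h s ^ 2 * cot (c * s)) (𝓝[>] 0) (𝓝 0) := by
  have hlin : HasDerivAt (fun s => c * s) c 0 := by simpa using (hasDerivAt_id 0).const_mul c
  have hsin : Tendsto (fun s => sin (c * s) / s) (𝓝[>] 0) (𝓝 c) := by
    simpa using hlin.sin.tendsto_div_self_nhdsGT_zero (by simp)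
  have hh0 : Tendsto h (𝓝[>] 0) (𝓝 0) := by
    simpa [h0] using hh.continuousAt.tendsto.mono_left nhdsWithin_le_nhds
  have hcos : Tendsto (fun s => cos (c * s)) (𝓝[>] 0) (𝓝 1) := by
    have : Continuous fun s => cos (c * s) := by fun_prop
    simpa using (this.tendsto 0).mono_left nhdsWithin_le_nhds
  have hlim := (((tendsto_const_nhds (x := c)).mul (hh.tendsto_div_self_nhdsGT_zero h0)).mul
    hh0).mul (hcos.mul (hsin.inv₀ hc))
  rw [mul_zero, zero_mul] at hlim
  refine hlim.congr' ?_
  filter_upwards [self_mem_nhdsWithin] with s (hs : 0 < s)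
  rw [cot_eq_cos_div_sin]
  field_simp

theorem sin_mul_pos_of_mem_Ioc (hc : 0 < c) (hcL : c * L ≤ π / 2) {t : ℝ}
    (ht : t ∈ Set.Ioc 0 L) : 0 < sin (c * t) := by
  apply sin_pos_of_pos_of_lt_pi (mul_pos hc ht.1)
  nlinarith [pi_pos, ht.2]

theorem ContDiff.continuous_deriv_sq_sub_mul_sq (hh : ContDiff ℝ 1 h) :
    Continuous fun t => deriv h t ^ 2 - c ^ 2 * h t ^ 2 :=
  (hh.continuous_deriv le_rfl).pow 2 |>.sub (continuous_const.mul (hh.continuous.pow 2))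

theorem integral_deriv_sq_sub_mul_sq_add_mul_sq_mul_cot_nonneg (hh : ContDiff ℝ 1 h)
    (hc : 0 < c) (hcL : c * L ≤ π / 2) {ε : ℝ} (hε : 0 < ε) (hεL : ε ≤ L) :
    0 ≤ (∫ t in ε..L, deriv h t ^ 2 - c ^ 2 * h t ^ 2) + c * h ε ^ 2 * cot (c * ε) := by
  have hsin : ∀ t ∈ Set.uIcc ε L, 0 < sin (c * t) := fun t ht => by
    rw [Set.uIcc_of_le hεL] at ht
    exact sin_mul_pos_of_mem_Ioc hc hcL ⟨hε.trans_le ht.1, ht.2⟩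
  set q := fun t => (deriv h t - c * h t * cot (c * t)) ^ 2
  have hq : IntervalIntegrable q MeasureTheory.volume ε L := by
    refine ContinuousOn.intervalIntegrable fun t ht => ?_
    have := (hsin t ht).ne'
    have := hh.continuous_deriv le_rfl
    have := hh.continuous
    simp only [q, cot_eq_cos_div_sin]
    fun_prop (disch := assumption)
  have hφ :
      IntervalIntegrable (fun t => deriv h t ^ 2 - c ^ 2 * h t ^ 2) MeasureTheory.volume ε L :=
    hh.continuous_deriv_sq_sub_mul_sq.intervalIntegrable ε L
  have hftc := integral_eq_sub_of_hasDerivAt (fun t ht => hasDerivAt_mul_sq_mul_cot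
    ((hh.differentiable one_ne_zero t).hasDerivAt) (hsin t ht).ne') (hφ.sub hq)
  rw [integral_sub hφ hq] at hftc
  have hcotL : 0 ≤ cot (c * L) := by
    rw [cot_eq_cos_div_sin]
    refine div_nonneg (cos_nonneg_of_neg_pi_div_two_le_of_le ?_ hcL) (hsin L Set.right_mem_uIcc).le
    nlinarith [pi_pos, hε.trans_le hεL]
  have hqnn : 0 ≤ ∫ t in ε..L, q t := integral_nonneg hεL fun t _ => sq_nonneg _
  linarith [mul_nonneg (mul_nonneg hc.le (sq_nonneg (h L))) hcotL]

theorem sq_mul_integral_sq_le_integral_deriv_sq (hh : ContDiff ℝ 1 h) (h0 : h 0 = 0)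
    (hc : 0 < c) (hL : 0 < L) (hcL : c * L ≤ π / 2) :
    c ^ 2 * ∫ t in 0..L, h t ^ 2 ≤ ∫ t in 0..L, deriv h t ^ 2 := by
  have hφ := hh.continuous_deriv_sq_sub_mul_sq (c := c)
  have hint : Tendsto (fun ε => ∫ t in ε..L, deriv h t ^ 2 - c ^ 2 * h t ^ 2) (𝓝[>] 0)
      (𝓝 (∫ t in 0..L, deriv h t ^ 2 - c ^ 2 * h t ^ 2)) := by
    simp only [integral_symm L]
    exact ((continuous_primitive (fun a b => hφ.intervalIntegrable a b) L).neg.tendsto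
      0).mono_left nhdsWithin_le_nhds
  have hcot := tendsto_mul_sq_mul_cot_nhdsGT_zero
    ((hh.differentiable one_ne_zero 0).hasDerivAt) h0 hc.ne'
  have hnonneg : 0 ≤ ∫ t in 0..L, deriv h t ^ 2 - c ^ 2 * h t ^ 2 := by
    refine ge_of_tendsto (by simpa using hint.add hcot) ?_
    filter_upwards [Ioo_mem_nhdsGT hL] with ε hε
    exact integral_deriv_sq_sub_mul_sq_add_mul_sq_mul_cot_nonneg hh hc hcL hε.1 hε.2.le
  have hd : Continuous fun t => deriv h t ^ 2 := (hh.continuous_deriv le_rfl).pow 2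
  have hs : Continuous fun t => c ^ 2 * h t ^ 2 := continuous_const.mul (hh.continuous.pow 2)
  rw [integral_sub (hd.intervalIntegrable 0 L) (hs.intervalIntegrable 0 L),
    integral_const_mul] at hnonneg
  linarith

end Wirtinger

theorem poincare_on_zero_one_general (h : ℝ → ℝ) (hh : ContDiff ℝ 1 h)
    (h0 : h 0 = 0) :
    ∫ t in (0:ℝ)..1, (deriv h t) ^ 2 ≥ (π / 2) ^ 2 * ∫ t in (0:ℝ)..1, (h t) ^ 2 :=
  sq_mul_integral_sq_le_integral_deriv_sq hh h0 (by positivity) one_pos (mul_one _).le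

theorem poincare_on_zero_one (h : ℝ → ℝ) (hh : ContDiff ℝ 1 h)
    (h0 : h 0 = 0) (h1 : deriv h 1 = 0) :
    ∫ t in (0:ℝ)..1, (deriv h t) ^ 2 ≥ (π / 2) ^ 2 * ∫ t in (0:ℝ)..1, (h t) ^ 2 :=
  poincare_on_zero_one_general h hh h0
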